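/- Let κ ≥ 0 and define the screened Coulomb potential u_κ : ℝ³ \ {0} → ℝ by u_κ(z) = e^{−κ‖z‖}/(4π‖z‖). Then u_κ is smooth on ℝ³ \ {0} and satisfies the linearized Poisson–Boltzmann equation away from the source: for every z ≠ 0, Δu_κ(z) = κ² u_κ(z), where Δ denotes the Laplacian (the sum of the three second partial derivatives). -/

import Mathlib

open Real Filter

noncomputable section

/-- The screened Coulomb (Yukawa) potential `u_κ(z) = e^{−κ‖z‖}/(4π‖z‖)`. -/
def screenedCoulomb (κ : ℝ) (z : EuclideanSpace ℝ (Fin 3)) : ℝ :=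
  Real.exp (-κ * ‖z‖) / (4 * π * ‖z‖)

/-- The coordinate Laplacian: the sum of the three second partial derivatives. -/
def coordLaplacian (f : EuclideanSpace ℝ (Fin 3) → ℝ) (z : EuclideanSpace ℝ (Fin 3)) : ℝ :=
  ∑ i : Fin 3,
    fderiv ℝ (fun w => fderiv ℝ f w (EuclideanSpace.single i 1)) z (EuclideanSpace.single i 1)

namespace SCaux

abbrev E := EuclideanSpace ℝ (Fin 3)

/-- The radial profile in the variable `s = ‖z‖²`. -/
def F (κ s : ℝ) : ℝ := Real.exp (-κ * Real.sqrt s) / (4 * π * Real.sqrt s)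

/-- First derivative of `F` in `s`. -/
def F1 (κ s : ℝ) : ℝ :=
  -(Real.exp (-κ * Real.sqrt s) * (κ * Real.sqrt s + 1)) / (8 * π * Real.sqrt s ^ 3)

/-- Second derivative of `F` in `s`. -/
def F2 (κ s : ℝ) : ℝ :=
  Real.exp (-κ * Real.sqrt s) * (κ ^ 2 * Real.sqrt s ^ 2 + 3 * κ * Real.sqrt s + 3) /
    (16 * π * Real.sqrt s ^ 5)

lemma hasDerivAt_F (κ : ℝ) {s : ℝ} (hs : 0 < s) : HasDerivAt (F κ) (F1 κ s) s := by
  have hr : 0 < Real.sqrt s := Real.sqrt_pos.2 hs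
  have hsq : HasDerivAt Real.sqrt (1 / (2 * Real.sqrt s)) s := Real.hasDerivAt_sqrt hs.ne'
  have hnum : HasDerivAt (fun t => Real.exp (-κ * Real.sqrt t))
      (Real.exp (-κ * Real.sqrt s) * (-κ * (1 / (2 * Real.sqrt s)))) s :=
    (hsq.const_mul (-κ)).exp
  have hden : HasDerivAt (fun t => 4 * π * Real.sqrt t)
      (4 * π * (1 / (2 * Real.sqrt s))) s := hsq.const_mul _
  have hden0 : 4 * π * Real.sqrt s ≠ 0 := by positivity
  have := hnum.div hden hden0
  refine this.congr_deriv ?_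
  unfold F1
  field_simp
  ring

lemma hasDerivAt_F1 (κ : ℝ) {s : ℝ} (hs : 0 < s) : HasDerivAt (F1 κ) (F2 κ s) s := by
  have hr : 0 < Real.sqrt s := Real.sqrt_pos.2 hs
  have hsq : HasDerivAt Real.sqrt (1 / (2 * Real.sqrt s)) s := Real.hasDerivAt_sqrt hs.ne'
  have hexp : HasDerivAt (fun t => Real.exp (-κ * Real.sqrt t))
      (Real.exp (-κ * Real.sqrt s) * (-κ * (1 / (2 * Real.sqrt s)))) s :=
    (hsq.const_mul (-κ)).exp
  have hlin : HasDerivAt (fun t => κ * Real.sqrt t + 1) (κ * (1 / (2 * Real.sqrt s))) s :=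
    (hsq.const_mul κ).add_const 1
  have hnum : HasDerivAt (fun t => -(Real.exp (-κ * Real.sqrt t) * (κ * Real.sqrt t + 1)))
      (-(Real.exp (-κ * Real.sqrt s) * (-κ * (1 / (2 * Real.sqrt s))) * (κ * Real.sqrt s + 1)
        + Real.exp (-κ * Real.sqrt s) * (κ * (1 / (2 * Real.sqrt s))))) s :=
    (hexp.mul hlin).neg
  have hpow : HasDerivAt (fun t => Real.sqrt t ^ 3)
      (3 * Real.sqrt s ^ 2 * (1 / (2 * Real.sqrt s))) s := by
    simpa using (hsq.fun_pow 3)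
  have hden : HasDerivAt (fun t => 8 * π * Real.sqrt t ^ 3)
      (8 * π * (3 * Real.sqrt s ^ 2 * (1 / (2 * Real.sqrt s)))) s := hpow.const_mul _
  have hden0 : 8 * π * Real.sqrt s ^ 3 ≠ 0 := by positivity
  have := hnum.div hden hden0
  refine this.congr_deriv ?_
  unfold F2
  set r := Real.sqrt s with hrdef
  field_simp
  ring

lemma key_identity (κ : ℝ) {s : ℝ} (hs : 0 < s) :
    4 * s * F2 κ s + 6 * F1 κ s = κ ^ 2 * F κ s := by
  have hr : 0 < Real.sqrt s := Real.sqrt_pos.2 hs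
  have hs2 : Real.sqrt s ^ 2 = s := Real.sq_sqrt hs.le
  unfold F F1 F2
  set r := Real.sqrt s with hrdef
  have hs2' : r ^ 2 = s := hs2
  rw [← hs2']
  field_simp
  ring

/-- `q z = ‖z‖²` as a sum of squares of coordinates. -/
def q (z : E) : ℝ := ∑ i, z i ^ 2

lemma q_pos {z : E} (hz : z ≠ 0) : 0 < q z := by
  obtain ⟨i, hi⟩ : ∃ i, z i ≠ 0 := by
    by_contra h
    push_neg at h
    exact hz (by ext i; simpa using h i)
  exact Finset.sum_pos' (fun j _ => sq_nonneg _) ⟨i, Finset.mem_univ i, by positivity⟩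

lemma sqrt_q (z : E) : Real.sqrt (q z) = ‖z‖ := by
  rw [EuclideanSpace.norm_eq]
  congr 1
  unfold q
  congr 1
  ext i
  rw [Real.norm_eq_abs, sq_abs]

lemma scn_eq (κ : ℝ) : screenedCoulomb κ = (F κ) ∘ q := by
  funext z
  rw [Function.comp_apply]
  unfold screenedCoulomb F
  rw [sqrt_q]

/-- The fderiv of `q`. -/
def Lq (z : E) : E →L[ℝ] ℝ := ∑ i : Fin 3, (2 * z i) • (EuclideanSpace.proj i : E →L[ℝ] ℝ)

lemma hasFDerivAt_q (z : E) : HasFDerivAt q (Lq z) z := by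
  have h : ∀ i : Fin 3, HasFDerivAt (fun w : E => w i ^ 2)
      ((2 * z i) • (EuclideanSpace.proj i : E →L[ℝ] ℝ)) z := by
    intro i
    have hp := (EuclideanSpace.proj i : E →L[ℝ] ℝ).hasFDerivAt (x := z)
    have := hp.fun_mul hp
    simpa [pow_two, two_mul, add_smul] using this
  exact HasFDerivAt.fun_sum (fun i _ => h i)

lemma Lq_apply (z : E) (i : Fin 3) : Lq z (EuclideanSpace.single i 1) = 2 * z i := by
  unfold Lq
  simp [ContinuousLinearMap.sum_apply, EuclideanSpace.single_apply, Finset.sum_ite_eq']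

lemma hasFDerivAt_scn (κ : ℝ) {z : E} (hz : z ≠ 0) :
    HasFDerivAt (screenedCoulomb κ) (F1 κ (q z) • Lq z) z := by
  rw [scn_eq]
  exact (hasDerivAt_F κ (q_pos hz)).comp_hasFDerivAt z (hasFDerivAt_q z)

lemma fderiv_scn_apply (κ : ℝ) {w : E} (hw : w ≠ 0) (i : Fin 3) :
    fderiv ℝ (screenedCoulomb κ) w (EuclideanSpace.single i 1) = F1 κ (q w) * (2 * w i) := by
  rw [(hasFDerivAt_scn κ hw).fderiv]
  rw [ContinuousLinearMap.smul_apply, Lq_apply]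
  simp

lemma hasFDerivAt_V (κ : ℝ) {z : E} (hz : z ≠ 0) (i : Fin 3) :
    HasFDerivAt (fun w : E => F1 κ (q w) * (2 * w i))
      (F1 κ (q z) • ((2 : ℝ) • (EuclideanSpace.proj i : E →L[ℝ] ℝ))
        + (2 * z i) • (F2 κ (q z) • Lq z)) z := by
  have hc : HasFDerivAt (fun w : E => F1 κ (q w)) (F2 κ (q z) • Lq z) z :=
    (hasDerivAt_F1 κ (q_pos hz)).comp_hasFDerivAt z (hasFDerivAt_q z)
  have hd : HasFDerivAt (fun w : E => 2 * w i)
      ((2 : ℝ) • (EuclideanSpace.proj i : E →L[ℝ] ℝ)) z :=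
    ((EuclideanSpace.proj i : E →L[ℝ] ℝ).hasFDerivAt (x := z)).const_mul 2
  exact hc.mul hd

end SCaux

/-- For `κ ≥ 0`, the screened Coulomb potential is smooth away from the origin and satisfies
the linearized Poisson–Boltzmann equation `Δu_κ = κ² u_κ` on `ℝ³ \ {0}`. -/
theorem screenedCoulomb_smooth_and_pb (κ : ℝ) (hκ : 0 ≤ κ) :
    ContDiffOn ℝ (⊤ : ℕ∞) (screenedCoulomb κ) {(0 : EuclideanSpace ℝ (Fin 3))}ᶜ ∧
    ∀ z : EuclideanSpace ℝ (Fin 3), z ≠ 0 →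
      coordLaplacian (screenedCoulomb κ) z = κ ^ 2 * screenedCoulomb κ z := by
  constructor
  · intro z hz
    rw [Set.mem_compl_singleton_iff] at hz
    have hn : ContDiffAt ℝ (⊤ : ℕ∞) (fun w : EuclideanSpace ℝ (Fin 3) => ‖w‖) z :=
      contDiffAt_norm ℝ hz
    have hnz : ‖z‖ ≠ 0 := norm_ne_zero_iff.2 hz
    have : ContDiffAt ℝ (⊤ : ℕ∞) (screenedCoulomb κ) z := by
      have := ((contDiffAt_const (c := -κ)).mul hn).exp.div
        ((contDiffAt_const (c := 4 * π)).mul hn) (by positivity)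
      exact this
    exact this.contDiffWithinAt
  · intro z hz
    have hs : 0 < SCaux.q z := SCaux.q_pos hz
    -- compute each second partial derivative
    have hterm : ∀ i : Fin 3,
        fderiv ℝ (fun w => fderiv ℝ (screenedCoulomb κ) w (EuclideanSpace.single i 1)) z
            (EuclideanSpace.single i 1)
          = SCaux.F1 κ (SCaux.q z) * 2
            + 2 * z i * (SCaux.F2 κ (SCaux.q z) * (2 * z i)) := by
      intro i
      have hev : (fun w => fderiv ℝ (screenedCoulomb κ) w (EuclideanSpace.single i 1))
          =ᶠ[nhds z] fun w => SCaux.F1 κ (SCaux.q w) * (2 * w i) := by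
        filter_upwards [IsOpen.mem_nhds isOpen_compl_singleton
          (Set.mem_compl_singleton_iff.2 hz)] with w hw
        exact SCaux.fderiv_scn_apply κ hw i
      rw [hev.fderiv_eq, (SCaux.hasFDerivAt_V κ hz i).fderiv]
      rw [ContinuousLinearMap.add_apply, ContinuousLinearMap.smul_apply,
        ContinuousLinearMap.smul_apply, ContinuousLinearMap.smul_apply,
        ContinuousLinearMap.smul_apply, SCaux.Lq_apply]
      simp [EuclideanSpace.single_apply]
      try ring
    unfold coordLaplacian
    have hsum : ∑ i : Fin 3,
        fderiv ℝ (fun w => fderiv ℝ (screenedCoulomb κ) w (EuclideanSpace.single i 1)) z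
          (EuclideanSpace.single i 1)
        = 6 * SCaux.F1 κ (SCaux.q z) + 4 * SCaux.q z * SCaux.F2 κ (SCaux.q z) := by
      rw [Finset.sum_congr rfl (fun i _ => hterm i)]
      rw [Finset.sum_add_distrib]
      simp only [Finset.sum_const, Finset.card_univ, Fintype.card_fin, nsmul_eq_mul]
      have : ∑ i : Fin 3, 2 * z i * (SCaux.F2 κ (SCaux.q z) * (2 * z i))
          = 4 * SCaux.q z * SCaux.F2 κ (SCaux.q z) := by
        simp only [SCaux.q, Finset.mul_sum, Finset.sum_mul]
        refine Finset.sum_congr rfl fun i _ => by ring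
      rw [this]
      ring
    rw [hsum]
    have hkey := SCaux.key_identity κ hs
    have hval : screenedCoulomb κ z = SCaux.F κ (SCaux.q z) := by
      rw [SCaux.scn_eq]; rfl
    rw [hval]
    linarith [hkey]

end
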